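/- arXiv:2411.12479 — 3 statements merged into one kernel-verified Lean document; each statement's English description precedes it below -/
import Mathlib

section
/- If the predictor graph consists of J disjoint complete subgraphs with vertex blocks B_1,...,B_J partitioning {1,...,p}, then ||β||_{G,τ} = Σ_{j=1}^J (min_{i ∈ B_j} τ_i) · ||β_{B_j}||_2 for every β ∈ R^p, where β_{B_j} denotes the subvector of β indexed by B_j. -/
open scoped BigOperators

/-- Euclidean (ℓ2) norm of a finitely indexed real vector. -/
noncomputable def l2norm {m : Type*} [Fintype m] (v : m → ℝ) : ℝ :=
  Real.sqrt (∑ i, v i ^ 2)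

/-- ℓ2 norm of the subvector of `v` indexed by the finite set `B`. -/
noncomputable def l2normOn {m : Type*} [Fintype m] (B : Finset m) (v : m → ℝ) : ℝ :=
  Real.sqrt (∑ j ∈ B, v j ^ 2)

/-- The graph-induced norm `‖β‖_{G,τ}`, defined as the infimum of
`∑ i, τ i * ‖V i‖₂` over all decompositions `∑ i, V i = β` with
`supp (V i) ⊆ N i`. -/
noncomputable def graphNorm (p : ℕ) (N : Fin p → Finset (Fin p)) (τ : Fin p → ℝ)
    (β : Fin p → ℝ) : ℝ :=
  sInf { s | ∃ V : Fin p → Fin p → ℝ,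
    (∀ j, (∑ i, V i j) = β j) ∧ (∀ i, ∀ j, j ∉ N i → V i j = 0) ∧
    s = ∑ i, τ i * l2norm (V i) }

lemma l2norm_nonneg {m : Type*} [Fintype m] (v : m → ℝ) : 0 ≤ l2norm v :=
  Real.sqrt_nonneg _

lemma l2norm_eq_norm {m : Type*} [Fintype m] (v : m → ℝ) :
    l2norm v = ‖(WithLp.equiv 2 (m → ℝ)).symm v‖ := by
  rw [EuclideanSpace.norm_eq, l2norm]
  congr 1
  apply Finset.sum_congr rfl
  intro i _
  rw [WithLp.equiv_symm_apply, WithLp.ofLp_toLp, Real.norm_eq_abs, sq_abs]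

lemma l2norm_sum_le {m ι : Type*} [Fintype m] (S : Finset ι) (V : ι → m → ℝ) :
    l2norm (fun x => ∑ i ∈ S, V i x) ≤ ∑ i ∈ S, l2norm (V i) := by
  simp only [l2norm_eq_norm]
  have h : (WithLp.equiv 2 (m → ℝ)).symm (fun x => ∑ i ∈ S, V i x)
      = ∑ i ∈ S, (WithLp.equiv 2 (m → ℝ)).symm (V i) := by
    ext x
    rw [WithLp.ofLp_sum, Finset.sum_apply]
    rfl
  rw [h]
  exact norm_sum_le _ _

lemma l2normOn_eq {m : Type*} [Fintype m] (B : Finset m) (v : m → ℝ) :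
    l2normOn B v = l2norm (fun x : ↥B => v x) := by
  rw [l2normOn, l2norm, ← Finset.sum_coe_sort B (fun j => v j ^ 2)]

lemma l2normOn_le {m : Type*} [Fintype m] (B : Finset m) (v : m → ℝ) :
    l2normOn B v ≤ l2norm v := by
  apply Real.sqrt_le_sqrt
  exact Finset.sum_le_sum_of_subset_of_nonneg (Finset.subset_univ B)
    (fun i _ _ => sq_nonneg _)

/-- if the graph is a disjoint union of `J` complete subgraphs
on blocks `B 1, ..., B J` partitioning `{1,...,p}` (so `N i = B j` for
`i ∈ B j`), then `‖β‖_{G,τ} = ∑ j, (min_{i ∈ B j} τ i) * ‖β_{B j}‖₂`. -/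
theorem graphNorm_disjoint_complete_blocks (p J : ℕ)
    (N : Fin p → Finset (Fin p)) (τ : Fin p → ℝ) (hτ : ∀ i, 0 < τ i)
    (B : Fin J → Finset (Fin p)) (hBne : ∀ j, (B j).Nonempty)
    (hpart : ∀ i : Fin p, ∃! j : Fin J, i ∈ B j)
    (hN : ∀ j : Fin J, ∀ i ∈ B j, N i = B j) :
    ∀ β : Fin p → ℝ,
      graphNorm p N τ β = ∑ j, ((B j).inf' (hBne j) τ) * l2normOn (B j) β := by
  intro β
  classical
  -- the classifying map
  set c : Fin p → Fin J := fun i => (hpart i).choose with hc_def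
  have hc : ∀ i, i ∈ B (c i) := fun i => (hpart i).choose_spec.1
  have huniq : ∀ i j, i ∈ B j → c i = j := fun i j h =>
    ((hpart i).choose_spec.2 j h).symm
  -- minimizers in each block
  have hmex : ∀ j, ∃ i ∈ B j, (B j).inf' (hBne j) τ = τ i :=
    fun j => (B j).exists_mem_eq_inf' (hBne j) τ
  choose m hm1 hm2 using hmex
  have hcm : ∀ j, c (m j) = j := fun j => huniq (m j) j (hm1 j)
  have hminj : Function.Injective m := by
    intro j j' h
    have := huniq (m j) j (hm1 j)
    rw [h, hcm j'] at this
    exact this.symm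
  -- fibers of c are the blocks
  have hfib : ∀ j, Finset.univ.filter (fun i => c i = j) = B j := by
    intro j
    ext i
    simp only [Finset.mem_filter, Finset.mem_univ, true_and]
    constructor
    · rintro rfl; exact hc i
    · exact huniq i j
  set T : ℝ := ∑ j, ((B j).inf' (hBne j) τ) * l2normOn (B j) β with hT_def
  set S : Set ℝ := { s | ∃ V : Fin p → Fin p → ℝ,
    (∀ j, (∑ i, V i j) = β j) ∧ (∀ i, ∀ j, j ∉ N i → V i j = 0) ∧
    s = ∑ i, τ i * l2norm (V i) } with hS_def
  -- Membership: T ∈ S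
  have hmem : T ∈ S := by
    refine ⟨fun i x => if i = m (c x) then β x else 0, ?_, ?_, ?_⟩
    · intro x
      simp [Finset.sum_ite_eq']
    · intro i x hx
      by_cases h : i = m (c x)
      · exfalso
        apply hx
        rw [h, hN (c x) (m (c x)) (hm1 (c x))]
        exact hc x
      · simp [h]
    · -- cost equals T
      rw [← Finset.sum_fiberwise Finset.univ c
        (fun i => τ i * l2norm (fun x => if i = m (c x) then β x else 0))]
      apply Finset.sum_congr rfl
      intro j _
      rw [hfib j]
      rw [Finset.sum_eq_single_of_mem (m j) (hm1 j)]
      · have hVm : l2norm (fun x => if m j = m (c x) then β x else 0)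
            = l2normOn (B j) β := by
          rw [l2norm, l2normOn]
          congr 1
          rw [← Finset.sum_filter_add_sum_filter_not Finset.univ (fun x => c x = j)]
          have h1 : ∀ x ∈ Finset.univ.filter (fun x => c x = j),
              (if m j = m (c x) then β x else 0) ^ 2 = β x ^ 2 := by
            intro x hx
            rw [Finset.mem_filter] at hx
            rw [hx.2, if_pos rfl]
          have h2 : ∀ x ∈ Finset.univ.filter (fun x => ¬ c x = j),
              (if m j = m (c x) then β x else 0) ^ 2 = 0 := by
            intro x hx
            rw [Finset.mem_filter] at hx
            rw [if_neg, zero_pow two_ne_zero]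
            intro h
            exact hx.2 (hminj h.symm)
          rw [Finset.sum_congr rfl h1, Finset.sum_congr rfl h2, Finset.sum_const_zero,
            add_zero, hfib j]
        rw [hVm, hm2 j]
      · intro i hi hne
        have hVz : (fun x => if i = m (c x) then β x else 0) = fun _ => (0:ℝ) := by
          funext x
          rw [if_neg]
          intro h
          apply hne
          have : c i = c x := by rw [h, hcm (c x)]
          rw [huniq i j hi] at this
          rw [h, ← this]
        rw [hVz]
        simp [l2norm]
  -- Lower bound: every element of S is ≥ T
  have hlb : ∀ s ∈ S, T ≤ s := by
    rintro s ⟨V, hsum, hsupp, rfl⟩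
    rw [← Finset.sum_fiberwise Finset.univ c (fun i => τ i * l2norm (V i))]
    apply Finset.sum_le_sum
    intro j _
    rw [hfib j]
    -- key : β restricted to B j equals the sum of V i over i ∈ B j
    have hkey : l2normOn (B j) β ≤ ∑ i ∈ B j, l2norm (V i) := by
      have hβ : ∀ x ∈ B j, β x = ∑ i ∈ B j, V i x := by
        intro x hx
        rw [← hsum x]
        symm
        apply Finset.sum_subset (Finset.subset_univ _)
        intro i _ hi
        apply hsupp
        rw [hN (c i) i (hc i)]
        intro hxB
        apply hi
        have : c x = c i := huniq x (c i) hxB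
        have hxj : c x = j := huniq x j hx
        rw [← this.symm.trans hxj]
        exact hc i
      have h1 : l2normOn (B j) β = l2norm (fun x : ↥(B j) => ∑ i ∈ B j, V i x) := by
        rw [l2normOn_eq]
        congr 1
        funext x
        exact hβ x x.2
      rw [h1]
      calc l2norm (fun x : ↥(B j) => ∑ i ∈ B j, V i x)
          ≤ ∑ i ∈ B j, l2norm (fun x : ↥(B j) => V i x) :=
            l2norm_sum_le (B j) (fun i (x : ↥(B j)) => V i x)
        _ ≤ ∑ i ∈ B j, l2norm (V i) := by
            apply Finset.sum_le_sum
            intro i _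
            rw [← l2normOn_eq]
            exact l2normOn_le _ _
    have hinf_pos : 0 < (B j).inf' (hBne j) τ := by rw [hm2 j]; exact hτ (m j)
    calc ((B j).inf' (hBne j) τ) * l2normOn (B j) β
        ≤ ((B j).inf' (hBne j) τ) * ∑ i ∈ B j, l2norm (V i) := by
          exact mul_le_mul_of_nonneg_left hkey hinf_pos.le
      _ = ∑ i ∈ B j, ((B j).inf' (hBne j) τ) * l2norm (V i) := Finset.mul_sum _ _ _
      _ ≤ ∑ i ∈ B j, τ i * l2norm (V i) := by
          apply Finset.sum_le_sum
          intro i hi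
          exact mul_le_mul_of_nonneg_right ((B j).inf'_le τ hi) (l2norm_nonneg _)
  show sInf S = T
  exact le_antisymm (csInf_le ⟨T, hlb⟩ hmem) (le_csInf ⟨T, hmem⟩ hlb)
end

section
/- Characterization of the dual ball condition for optimality at zero: β = 0 is an optimal solution of min_β { ||y − Xβ||_2/√n + (λ/n)||β||_{G,τ} } (with y ≠ 0) if and only if for every i ∈ {1,...,p}, ||X_{N_i}^T y||_2 / ||y||_2 ≤ λ τ_i / √n, where X_{N_i} denotes the submatrix of X with columns indexed by N_i. -/
open scoped BigOperators

lemma l2normOn_nonneg {m : Type*} [Fintype m] (B : Finset m) (v : m → ℝ) : 0 ≤ l2normOn B v :=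
  Real.sqrt_nonneg _

lemma l2norm_sq {m : Type*} [Fintype m] (v : m → ℝ) : (l2norm v) ^ 2 = ∑ i, v i ^ 2 :=
  Real.sq_sqrt (Finset.sum_nonneg fun i _ => sq_nonneg _)

lemma l2normOn_sq {m : Type*} [Fintype m] (B : Finset m) (v : m → ℝ) :
    (l2normOn B v) ^ 2 = ∑ j ∈ B, v j ^ 2 :=
  Real.sq_sqrt (Finset.sum_nonneg fun i _ => sq_nonneg _)

lemma cauchy {m : Type*} [Fintype m] (v w : m → ℝ) :
    ∑ i, v i * w i ≤ l2norm v * l2norm w := by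
  have h2 : (∑ i, v i * w i) ^ 2 ≤ (l2norm v * l2norm w) ^ 2 := by
    rw [mul_pow, l2norm_sq, l2norm_sq]
    exact Finset.sum_mul_sq_le_sq_mul_sq Finset.univ v w
  calc ∑ i, v i * w i ≤ |∑ i, v i * w i| := le_abs_self _
    _ = Real.sqrt ((∑ i, v i * w i) ^ 2) := (Real.sqrt_sq_eq_abs _).symm
    _ ≤ Real.sqrt ((l2norm v * l2norm w) ^ 2) := Real.sqrt_le_sqrt h2
    _ = l2norm v * l2norm w :=
        Real.sqrt_sq (mul_nonneg (l2norm_nonneg v) (l2norm_nonneg w))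

/-- Cauchy–Schwarz against a vector supported on `B`. -/
lemma cauchyOn {m : Type*} [Fintype m] (B : Finset m) (w v : m → ℝ)
    (hv : ∀ j, j ∉ B → v j = 0) :
    ∑ j, w j * v j ≤ l2normOn B w * l2norm v := by
  have hsum : ∑ j, w j * v j = ∑ j ∈ B, w j * v j := by
    rw [← Finset.sum_subset (Finset.subset_univ B)]
    intro j _ hj
    rw [hv j hj, mul_zero]
  have h2 : (∑ j ∈ B, w j * v j) ^ 2 ≤ (l2normOn B w * l2norm v) ^ 2 := by
    rw [mul_pow, l2normOn_sq, l2norm_sq]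
    calc (∑ j ∈ B, w j * v j) ^ 2 ≤ (∑ j ∈ B, w j ^ 2) * ∑ j ∈ B, v j ^ 2 :=
          Finset.sum_mul_sq_le_sq_mul_sq B w v
      _ ≤ (∑ j ∈ B, w j ^ 2) * ∑ j, v j ^ 2 := by
          apply mul_le_mul_of_nonneg_left
          · exact Finset.sum_le_sum_of_subset_of_nonneg (Finset.subset_univ B)
              (fun j _ _ => sq_nonneg _)
          · exact Finset.sum_nonneg fun j _ => sq_nonneg _
  rw [hsum]
  calc ∑ j ∈ B, w j * v j ≤ |∑ j ∈ B, w j * v j| := le_abs_self _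
    _ = Real.sqrt ((∑ j ∈ B, w j * v j) ^ 2) := (Real.sqrt_sq_eq_abs _).symm
    _ ≤ Real.sqrt ((l2normOn B w * l2norm v) ^ 2) := Real.sqrt_le_sqrt h2
    _ = l2normOn B w * l2norm v :=
        Real.sqrt_sq (mul_nonneg (l2normOn_nonneg B w) (l2norm_nonneg v))

lemma sum_sq_sub {m : Type*} [Fintype m] (f g : m → ℝ) :
    ∑ i, (f i - g i) ^ 2 = ∑ i, f i ^ 2 - 2 * ∑ i, f i * g i + ∑ i, g i ^ 2 := by
  rw [Finset.sum_congr rfl (fun i (_ : i ∈ Finset.univ) =>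
        show (f i - g i) ^ 2 = f i ^ 2 - 2 * (f i * g i) + g i ^ 2 by ring),
      Finset.sum_add_distrib, Finset.sum_sub_distrib, ← Finset.mul_sum]

lemma l2norm_sub_le {m : Type*} [Fintype m] (f g : m → ℝ) :
    l2norm (f - g) ≤ l2norm f + l2norm g := by
  have hcs : ∑ i, f i * (-g) i ≤ l2norm f * l2norm (-g) := cauchy f (-g)
  have hng : l2norm (-g) = l2norm g := by
    unfold l2norm; congr 1; exact Finset.sum_congr rfl fun i _ => by simp [neg_pow]
  rw [hng] at hcs
  have h2 : ∑ i, (f i - g i) ^ 2 ≤ (l2norm f + l2norm g) ^ 2 := by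
    rw [sum_sq_sub, add_sq, l2norm_sq, l2norm_sq]
    have : -(∑ i, f i * g i) = ∑ i, f i * (-g) i := by
      rw [← Finset.sum_neg_distrib]
      exact Finset.sum_congr rfl fun i _ => by simp [Pi.neg_apply]
    nlinarith [hcs]
  calc l2norm (f - g) = Real.sqrt (∑ i, (f i - g i) ^ 2) := by
        unfold l2norm; congr 1
    _ ≤ Real.sqrt ((l2norm f + l2norm g) ^ 2) := Real.sqrt_le_sqrt h2
    _ = l2norm f + l2norm g :=
        Real.sqrt_sq (add_nonneg (l2norm_nonneg f) (l2norm_nonneg g))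

lemma l2norm_smul {m : Type*} [Fintype m] (t : ℝ) (ht : 0 ≤ t) (v : m → ℝ) :
    l2norm (fun j => t * v j) = t * l2norm v := by
  unfold l2norm
  rw [show ∑ i, (t * v i) ^ 2 = t ^ 2 * ∑ i, v i ^ 2 by
        rw [Finset.mul_sum]; exact Finset.sum_congr rfl fun i _ => by ring,
      Real.sqrt_mul (sq_nonneg t), Real.sqrt_sq ht]

lemma le_of_forall_t {a b K : ℝ} (h : ∀ t : ℝ, 0 < t → a ≤ b + t * K) : a ≤ b := by
  rcases le_or_gt K 0 with hK | hK
  · have h1 := h 1 one_pos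
    nlinarith
  · apply le_of_forall_pos_le_add
    intro ε hε
    have := h (ε / K) (div_pos hε hK)
    calc a ≤ b + ε / K * K := this
      _ = b + ε := by field_simp

/-- `β = 0` is optimal for the square-root graph-penalized
problem (with `y ≠ 0`) iff `‖X_{N_i}ᵀ y‖₂ / ‖y‖₂ ≤ λ τ_i / √n` for all `i`. -/
theorem zero_optimal_iff_dual_ball (n p : ℕ) (X : Matrix (Fin n) (Fin p) ℝ)
    (y : Fin n → ℝ) (hy : y ≠ 0) (lam : ℝ) (hlam : 0 < lam) (hn : 0 < n)
    (N : Fin p → Finset (Fin p)) (τ : Fin p → ℝ) (hτ : ∀ i, 0 < τ i)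
    (hN : ∀ i, i ∈ N i) :
    (∀ β : Fin p → ℝ,
        l2norm (y - X.mulVec 0) / Real.sqrt n + lam / n * graphNorm p N τ 0 ≤
        l2norm (y - X.mulVec β) / Real.sqrt n + lam / n * graphNorm p N τ β) ↔
    (∀ i, l2normOn (N i) (X.transpose.mulVec y) / l2norm y ≤
        lam * τ i / Real.sqrt n) := by
  classical
  have hs : (0:ℝ) < Real.sqrt n := Real.sqrt_pos.2 (by exact_mod_cast hn)
  have hns : Real.sqrt n * Real.sqrt n = (n : ℝ) := Real.mul_self_sqrt (Nat.cast_nonneg n)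
  have hsne : Real.sqrt n ≠ 0 := ne_of_gt hs
  have hlamne : lam ≠ 0 := ne_of_gt hlam
  have hnne : ((n:ℝ)) ≠ 0 := by exact_mod_cast hn.ne'
  have e3 : ∀ g : ℝ, lam / (n:ℝ) * g * Real.sqrt n = lam / Real.sqrt n * g := by
    intro g
    field_simp
    rw [sq, hns, mul_comm]
  have hy0 : 0 < l2norm y := by
    obtain ⟨k, hk⟩ := Function.ne_iff.1 hy
    exact Real.sqrt_pos.2 (Finset.sum_pos' (fun i _ => sq_nonneg _)
      ⟨k, Finset.mem_univ k, by exact pow_two_pos_of_ne_zero hk⟩)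
  set w : Fin p → ℝ := X.transpose.mulVec y with hwdef
  have hinner : ∀ β : Fin p → ℝ, ∑ k, y k * X.mulVec β k = ∑ j, w j * β j := by
    intro β
    simp only [hwdef, Matrix.mulVec, Matrix.transpose_apply, dotProduct, Finset.sum_mul,
      Finset.mul_sum]
    rw [Finset.sum_comm]
    exact Finset.sum_congr rfl fun j _ => Finset.sum_congr rfl fun k _ => by ring
  have hbdd : ∀ β : Fin p → ℝ, BddBelow {s | ∃ V : Fin p → Fin p → ℝ,
      (∀ j, (∑ i, V i j) = β j) ∧ (∀ i, ∀ j, j ∉ N i → V i j = 0) ∧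
      s = ∑ i, τ i * l2norm (V i)} := by
    intro β
    refine ⟨0, fun s hs => ?_⟩
    obtain ⟨V, -, -, rfl⟩ := hs
    exact Finset.sum_nonneg fun i _ => mul_nonneg (hτ i).le (l2norm_nonneg _)
  have hnonneg : ∀ β : Fin p → ℝ, 0 ≤ graphNorm p N τ β := by
    intro β
    apply Real.sInf_nonneg
    rintro s ⟨V, -, -, rfl⟩
    exact Finset.sum_nonneg fun i _ => mul_nonneg (hτ i).le (l2norm_nonneg _)
  have hne : ∀ β : Fin p → ℝ, ∃ s, s ∈ {s | ∃ V : Fin p → Fin p → ℝ,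
      (∀ j, (∑ i, V i j) = β j) ∧ (∀ i, ∀ j, j ∉ N i → V i j = 0) ∧
      s = ∑ i, τ i * l2norm (V i)} := by
    intro β
    refine ⟨_, fun i j => if i = j then β j else 0, fun j => ?_, fun i j hj => ?_, rfl⟩
    · simp
    · simp only [ite_eq_right_iff]
      intro h; subst h; exact absurd (hN i) hj
  have hg0 : graphNorm p N τ 0 = 0 := by
    have hmem : (0:ℝ) ∈ {s | ∃ V : Fin p → Fin p → ℝ,
        (∀ j, (∑ i, V i j) = (0 : Fin p → ℝ) j) ∧ (∀ i, ∀ j, j ∉ N i → V i j = 0) ∧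
        s = ∑ i, τ i * l2norm (V i)} := by
      refine ⟨fun _ _ => 0, by simp, fun _ _ _ => rfl, ?_⟩
      simp [l2norm]
    exact le_antisymm (csInf_le (hbdd 0) hmem) (hnonneg 0)
  constructor
  · -- optimality → dual bound
    intro hopt i
    set c := l2normOn (N i) w with hcdef
    have hcnn : 0 ≤ c := l2normOn_nonneg _ _
    rcases eq_or_lt_of_le hcnn with hc0 | hcpos
    · rw [← hc0, zero_div]
      exact le_of_lt (div_pos (mul_pos hlam (hτ i)) hs)
    set C := lam * τ i / Real.sqrt n with hCdef
    have hCpos : 0 < C := div_pos (mul_pos hlam (hτ i)) hs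
    set v : Fin p → ℝ := fun j => if j ∈ N i then w j else 0 with hv
    have hvsupp : ∀ j, j ∉ N i → v j = 0 := fun j hj => by simp [hv, hj]
    have hvnorm : l2norm v = c := by
      rw [hcdef]; unfold l2norm l2normOn
      congr 1
      rw [← Finset.sum_subset (Finset.subset_univ (N i))
        (fun j _ hj => by simp [hv, hj])]
      exact Finset.sum_congr rfl fun j hj => by simp [hv, hj]
    have hwv : ∑ j, w j * v j = c ^ 2 := by
      rw [hcdef, l2normOn_sq]
      rw [← Finset.sum_subset (Finset.subset_univ (N i))
        (fun j _ hj => by simp [hv, hj])]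
      exact Finset.sum_congr rfl fun j hj => by simp [hv, hj, sq]
    set M := l2norm (X.mulVec v) with hM
    have hMnn : 0 ≤ M := l2norm_nonneg _
    have key : ∀ t : ℝ, 0 < t →
        2 * c ^ 2 ≤ 2 * C * c * l2norm y + t * (M ^ 2 + C * c * M) := by
      intro t ht
      set βt : Fin p → ℝ := fun j => t * v j with hβt
      -- graph norm bound
      have hgle : graphNorm p N τ βt ≤ τ i * (t * c) := by
        have hmem : (∑ i', τ i' * l2norm (fun j => if i' = i then βt j else 0)) ∈
            {s | ∃ V : Fin p → Fin p → ℝ,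
              (∀ j, (∑ i', V i' j) = βt j) ∧ (∀ i', ∀ j, j ∉ N i' → V i' j = 0) ∧
              s = ∑ i', τ i' * l2norm (V i')} := by
          refine ⟨fun i' j => if i' = i then βt j else 0, fun j => by simp, ?_, rfl⟩
          intro i' j hj
          simp only [ite_eq_right_iff]
          intro h; subst h
          rw [hβt]; simp [hvsupp j hj]
        have := csInf_le (hbdd βt) hmem
        refine this.trans (le_of_eq ?_)
        rw [Finset.sum_eq_single i]
        · have : (fun j => if i = i then βt j else 0) = fun j => t * v j := by
            funext j; simp [hβt]
          rw [this, l2norm_smul t ht.le, hvnorm]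
        · intro b _ hb
          have : (fun j => if b = i then βt j else 0) = fun _ => (0:ℝ) := by
            funext j; simp [hb]
          rw [this]; simp [l2norm]
        · intro h; exact absurd (Finset.mem_univ i) h
      -- optimality at βt
      set a := l2norm (y - X.mulVec βt) with ha
      have hann : 0 ≤ a := l2norm_nonneg _
      have h1 : l2norm y ≤ a + lam / Real.sqrt n * (τ i * (t * c)) := by
        have h0 := hopt βt
        rw [Matrix.mulVec_zero, sub_zero, hg0, mul_zero, add_zero, ← ha] at h0
        have e1 : l2norm y / Real.sqrt n * Real.sqrt n = l2norm y :=
          div_mul_cancel₀ _ (ne_of_gt hs)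
        have e2 : a / Real.sqrt n * Real.sqrt n = a := div_mul_cancel₀ _ (ne_of_gt hs)
        have h0' := mul_le_mul_of_nonneg_right h0 hs.le
        rw [add_mul, e1, e2, e3] at h0'
        have : lam / Real.sqrt n * graphNorm p N τ βt ≤
            lam / Real.sqrt n * (τ i * (t * c)) :=
          mul_le_mul_of_nonneg_left hgle (by positivity)
        linarith
      -- X.mulVec βt = t • X.mulVec v
      have hXβt : X.mulVec βt = fun k => t * X.mulVec v k := by
        funext k
        simp only [hβt, Matrix.mulVec, dotProduct, Finset.mul_sum]
        exact Finset.sum_congr rfl fun j _ => by ring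
      have h3 : a ≤ l2norm y + t * M := by
        rw [ha, hXβt]
        have := l2norm_sub_le y (fun k => t * X.mulVec v k)
        rwa [l2norm_smul t ht.le] at this
      have h4 : (l2norm y) ^ 2 - a ^ 2 = 2 * t * c ^ 2 - t ^ 2 * M ^ 2 := by
        rw [ha, hXβt, l2norm_sq, l2norm_sq]
        have hexp : ∑ k, (y k - t * X.mulVec v k) ^ 2
            = ∑ k, y k ^ 2 - 2 * ∑ k, y k * (t * X.mulVec v k)
              + ∑ k, (t * X.mulVec v k) ^ 2 := by
          have := sum_sq_sub y (fun k => t * X.mulVec v k)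
          simpa using this
        have e1 : ∑ k, y k * (t * X.mulVec v k) = t * c ^ 2 := by
          rw [show ∑ k, y k * (t * X.mulVec v k) = t * ∑ k, y k * X.mulVec v k by
            rw [Finset.mul_sum]; exact Finset.sum_congr rfl fun k _ => by ring]
          rw [hinner v, hwv]
        have e2 : ∑ k, (t * X.mulVec v k) ^ 2 = t ^ 2 * M ^ 2 := by
          rw [hM, l2norm_sq, Finset.mul_sum]
          exact Finset.sum_congr rfl fun k _ => by ring
        have : (fun k => y k - t * X.mulVec v k) = y - fun k => t * X.mulVec v k := by
          funext k; simp
        rw [← this] at *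
        rw [hexp, e1, e2]; ring
      have hCD : lam / Real.sqrt n * (τ i * (t * c)) = C * (t * c) := by
        rw [hCdef]; ring
      rw [hCD] at h1
      have h2 : (l2norm y) ^ 2 - a ^ 2 ≤ C * (t * c) * (l2norm y + a) := by
        have hsub : l2norm y - a ≤ C * (t * c) := by linarith
        have := mul_le_mul_of_nonneg_right hsub
          (by positivity : (0:ℝ) ≤ l2norm y + a)
        nlinarith
      have h5 : 2 * t * c ^ 2 - t ^ 2 * M ^ 2 ≤ C * (t * c) * (2 * l2norm y + t * M) := by
        rw [← h4]
        refine h2.trans ?_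
        have : l2norm y + a ≤ 2 * l2norm y + t * M := by linarith
        exact mul_le_mul_of_nonneg_left this (by positivity)
      have h6 : t * (2 * c ^ 2) ≤ t * (2 * C * c * l2norm y + t * (M ^ 2 + C * c * M)) := by
        nlinarith
      exact (mul_le_mul_iff_right₀ ht).1 h6
    have hfinal : 2 * c ^ 2 ≤ 2 * C * c * l2norm y := le_of_forall_t key
    rw [div_le_iff₀ hy0]
    nlinarith
  · -- dual bound → optimality
    intro hdual β
    rw [Matrix.mulVec_zero, sub_zero, hg0, mul_zero, add_zero]
    set a := l2norm (y - X.mulVec β) with ha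
    have hann : 0 ≤ a := l2norm_nonneg _
    have hkey : l2norm y - a ≤ lam / Real.sqrt n * graphNorm p N τ β := by
      have hg : Real.sqrt n / lam * (l2norm y - a) ≤ graphNorm p N τ β := by
        apply le_csInf ⟨_, Classical.choose_spec (hne β)⟩
        rintro s ⟨V, hVsum, hVsupp, rfl⟩
        -- per-element bound
        have hCS : l2norm y * (l2norm y - a) ≤ ∑ k, y k * X.mulVec β k := by
          have hc := cauchy y (y - X.mulVec β)
          have e : ∑ k, y k * (y - X.mulVec β) k
              = ∑ k, y k ^ 2 - ∑ k, y k * X.mulVec β k := by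
            rw [← Finset.sum_sub_distrib]
            exact Finset.sum_congr rfl fun k _ => by simp [Pi.sub_apply]; ring
          rw [e, ← l2norm_sq] at hc
          nlinarith
        have hsplit : ∑ k, y k * X.mulVec β k
            ≤ ∑ i, l2normOn (N i) w * l2norm (V i) := by
          rw [hinner β]
          calc ∑ j, w j * β j = ∑ j, ∑ i, w j * V i j := by
                refine Finset.sum_congr rfl fun j _ => ?_
                rw [← hVsum j, Finset.mul_sum]
            _ = ∑ i, ∑ j, w j * V i j := Finset.sum_comm
            _ ≤ ∑ i, l2normOn (N i) w * l2norm (V i) :=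
                Finset.sum_le_sum fun i _ => cauchyOn (N i) w (V i) (hVsupp i)
        have hterm : ∑ i, l2normOn (N i) w * l2norm (V i)
            ≤ lam / Real.sqrt n * l2norm y * ∑ i, τ i * l2norm (V i) := by
          rw [Finset.mul_sum]
          refine Finset.sum_le_sum fun i _ => ?_
          have hd : l2normOn (N i) w ≤ lam * τ i / Real.sqrt n * l2norm y :=
            (div_le_iff₀ hy0).1 (hdual i)
          calc l2normOn (N i) w * l2norm (V i)
              ≤ lam * τ i / Real.sqrt n * l2norm y * l2norm (V i) :=
                mul_le_mul_of_nonneg_right hd (l2norm_nonneg _)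
            _ = lam / Real.sqrt n * l2norm y * (τ i * l2norm (V i)) := by ring
        have hmain : l2norm y * (l2norm y - a)
            ≤ lam / Real.sqrt n * l2norm y * ∑ i, τ i * l2norm (V i) :=
          hCS.trans (hsplit.trans hterm)
        have hdiv : l2norm y - a ≤ lam / Real.sqrt n * ∑ i, τ i * l2norm (V i) := by
          have := hmain
          rw [show lam / Real.sqrt n * l2norm y * ∑ i, τ i * l2norm (V i)
              = l2norm y * (lam / Real.sqrt n * ∑ i, τ i * l2norm (V i)) by ring] at this
          exact (mul_le_mul_iff_right₀ hy0).1 this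
        have hpos : (0:ℝ) ≤ Real.sqrt n / lam := by positivity
        have hmul := mul_le_mul_of_nonneg_left hdiv hpos
        rwa [show Real.sqrt n / lam * (lam / Real.sqrt n * ∑ i, τ i * l2norm (V i))
            = ∑ i, τ i * l2norm (V i) by
          field_simp] at hmul
      have hpos2 : (0:ℝ) ≤ lam / Real.sqrt n := by positivity
      have hmul := mul_le_mul_of_nonneg_left hg hpos2
      rwa [show lam / Real.sqrt n * (Real.sqrt n / lam * (l2norm y - a))
          = l2norm y - a by field_simp] at hmul
    -- conclude
    have h2 : l2norm y / Real.sqrt n - a / Real.sqrt n ≤ lam / ↑n * graphNorm p N τ β := by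
      rw [div_sub_div_same, div_le_iff₀ hs]
      rw [e3]
      exact hkey
    linarith
end

section
/- The dual norm of the graph-induced norm is the maximal weighted block ℓ2 norm: for z ∈ R^p, max { ⟨z, β⟩ : ||β||_{G,τ} ≤ 1 } = max_{1≤i≤p} ||z_{N_i}||_2 / τ_i, where z_{N_i} is the subvector of z indexed by N_i. -/
open scoped BigOperators

lemma l2norm_zero_fun {m : Type*} [Fintype m] : l2norm (fun _ : m => (0:ℝ)) = 0 := by
  simp [l2norm]

lemma cs_aux {m : Type*} [Fintype m] (B : Finset m) (z v : m → ℝ)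
    (hv : ∀ j, j ∉ B → v j = 0) :
    ∑ j, z j * v j ≤ l2normOn B z * l2norm v := by
  have h1 : ∑ j, z j * v j = ∑ j ∈ B, z j * v j :=
    (Finset.sum_subset (Finset.subset_univ B)
      (fun x _ hx => by rw [hv x hx, mul_zero])).symm
  have h2 := Finset.sum_mul_sq_le_sq_mul_sq B z v
  have h3 : ∑ j ∈ B, v j ^ 2 ≤ ∑ j, v j ^ 2 :=
    Finset.sum_le_sum_of_subset_of_nonneg (Finset.subset_univ B)
      (fun _ _ _ => sq_nonneg _)
  have h4 : (∑ j ∈ B, z j * v j) ^ 2 ≤ (∑ j ∈ B, z j ^ 2) * ∑ j, v j ^ 2 :=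
    h2.trans (mul_le_mul_of_nonneg_left h3
      (Finset.sum_nonneg fun _ _ => sq_nonneg _))
  rw [h1]
  calc ∑ j ∈ B, z j * v j ≤ |∑ j ∈ B, z j * v j| := le_abs_self _
    _ = Real.sqrt ((∑ j ∈ B, z j * v j) ^ 2) := (Real.sqrt_sq_eq_abs _).symm
    _ ≤ Real.sqrt ((∑ j ∈ B, z j ^ 2) * ∑ j, v j ^ 2) := Real.sqrt_le_sqrt h4
    _ = l2normOn B z * l2norm v := by
        rw [Real.sqrt_mul (Finset.sum_nonneg fun _ _ => sq_nonneg _)]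
        rfl

/-- the dual norm of the graph norm is the maximal weighted block
ℓ2 norm: `sup { ⟨z, β⟩ : ‖β‖_{G,τ} ≤ 1 } = max_i ‖z_{N_i}‖₂ / τ_i`. -/
theorem graphNorm_dual (p : ℕ) (hp : 0 < p) (N : Fin p → Finset (Fin p))
    (τ : Fin p → ℝ) (hτ : ∀ i, 0 < τ i) (hN : ∀ i, i ∈ N i) (z : Fin p → ℝ) :
    sSup { t : ℝ | ∃ β : Fin p → ℝ, graphNorm p N τ β ≤ 1 ∧ t = ∑ i, z i * β i } =
      Finset.univ.sup' ⟨⟨0, hp⟩, Finset.mem_univ _⟩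
        (fun i => l2normOn (N i) z / τ i) := by
  set M : ℝ := Finset.univ.sup' ⟨⟨0, hp⟩, Finset.mem_univ _⟩
    (fun i => l2normOn (N i) z / τ i) with hMdef
  have hMge : ∀ i, l2normOn (N i) z / τ i ≤ M :=
    fun i => Finset.le_sup' (fun i => l2normOn (N i) z / τ i) (Finset.mem_univ i)
  have hM0 : 0 ≤ M :=
    le_trans (div_nonneg (Real.sqrt_nonneg _) (hτ ⟨0, hp⟩).le) (hMge ⟨0, hp⟩)
  -- bddBelow of decomposition sets
  have hbb : ∀ β : Fin p → ℝ, BddBelow { s | ∃ V : Fin p → Fin p → ℝ,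
      (∀ j, (∑ i, V i j) = β j) ∧ (∀ i, ∀ j, j ∉ N i → V i j = 0) ∧
      s = ∑ i, τ i * l2norm (V i) } := by
    intro β
    refine ⟨0, ?_⟩
    rintro s ⟨V, -, -, rfl⟩
    exact Finset.sum_nonneg fun i _ => mul_nonneg (hτ i).le (l2norm_nonneg _)
  -- upper bound: every element of the set is ≤ M
  have hub : ∀ t ∈ { t : ℝ | ∃ β : Fin p → ℝ,
      graphNorm p N τ β ≤ 1 ∧ t = ∑ i, z i * β i }, t ≤ M := by
    rintro t ⟨β, hβ, rfl⟩
    have key : ∀ s ∈ { s | ∃ V : Fin p → Fin p → ℝ,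
        (∀ j, (∑ i, V i j) = β j) ∧ (∀ i, ∀ j, j ∉ N i → V i j = 0) ∧
        s = ∑ i, τ i * l2norm (V i) }, ∑ i, z i * β i ≤ M * s := by
      rintro s ⟨V, hsum, hsupp, rfl⟩
      calc ∑ j, z j * β j = ∑ j, z j * ∑ i, V i j := by
            apply Finset.sum_congr rfl; intro j _; rw [hsum j]
        _ = ∑ j, ∑ i, z j * V i j := by
            apply Finset.sum_congr rfl; intro j _; rw [Finset.mul_sum]
        _ = ∑ i, ∑ j, z j * V i j := Finset.sum_comm
        _ ≤ ∑ i, l2normOn (N i) z * l2norm (V i) :=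
            Finset.sum_le_sum fun i _ => cs_aux (N i) z (V i) (hsupp i)
        _ ≤ ∑ i, M * (τ i * l2norm (V i)) := by
            apply Finset.sum_le_sum
            intro i _
            have hτi : τ i ≠ 0 := (hτ i).ne'
            have h1 : l2normOn (N i) z * l2norm (V i)
                = (l2normOn (N i) z / τ i) * (τ i * l2norm (V i)) := by
              field_simp
            rw [h1]
            exact mul_le_mul_of_nonneg_right (hMge i)
              (mul_nonneg (hτ i).le (l2norm_nonneg _))
        _ = M * ∑ i, τ i * l2norm (V i) := (Finset.mul_sum _ _ _).symm
    -- decomposition set is nonempty (diagonal decomposition)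
    have hne : { s | ∃ V : Fin p → Fin p → ℝ,
        (∀ j, (∑ i, V i j) = β j) ∧ (∀ i, ∀ j, j ∉ N i → V i j = 0) ∧
        s = ∑ i, τ i * l2norm (V i) }.Nonempty := by
      refine ⟨_, fun i j => if i = j then β j else 0, ?_, ?_, rfl⟩
      · intro j; simp
      · intro i j hj
        have : i ≠ j := fun h => hj (h ▸ hN i)
        simp [this]
    rcases hM0.lt_or_eq with hMpos | hMzero
    · have h1 : (∑ i, z i * β i) / M ≤ graphNorm p N τ β := by
        apply le_csInf hne
        intro s hs
        rw [div_le_iff₀ hMpos]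
        calc ∑ i, z i * β i ≤ M * s := key s hs
          _ = s * M := mul_comm _ _
      have h2 : (∑ i, z i * β i) / M ≤ 1 := h1.trans hβ
      calc ∑ i, z i * β i = (∑ i, z i * β i) / M * M := by field_simp
        _ ≤ 1 * M := mul_le_mul_of_nonneg_right h2 hMpos.le
        _ = M := one_mul M
    · -- M = 0 forces z = 0
      have hz : ∀ j, z j = 0 := by
        intro j
        have h1 : l2normOn (N j) z / τ j ≤ 0 := hMzero ▸ hMge j
        have h2 : l2normOn (N j) z ≤ 0 := by
          have := (div_le_iff₀ (hτ j)).1 h1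
          simpa using this
        have h3 : l2normOn (N j) z = 0 := le_antisymm h2 (Real.sqrt_nonneg _)
        have h4 : (∑ k ∈ N j, z k ^ 2) = 0 := by
          have hnn : (0:ℝ) ≤ ∑ k ∈ N j, z k ^ 2 :=
            Finset.sum_nonneg fun _ _ => sq_nonneg _
          have := Real.sqrt_eq_zero hnn |>.1 h3
          exact this
        have h5 : z j ^ 2 = 0 := by
          have := (Finset.sum_eq_zero_iff_of_nonneg
            (fun k _ => sq_nonneg (z k))).1 h4 j (hN j)
          exact this
        exact pow_eq_zero_iff (two_ne_zero) |>.1 h5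
      have : ∑ i, z i * β i = 0 := by
        apply Finset.sum_eq_zero; intro i _; rw [hz i, zero_mul]
      rw [this, ← hMzero]
  -- membership: M is attained
  obtain ⟨i0, -, hi0⟩ := Finset.exists_mem_eq_sup' (⟨⟨0, hp⟩, Finset.mem_univ _⟩ :
      Finset.univ.Nonempty) (fun i => l2normOn (N i) z / τ i)
  set c : ℝ := l2normOn (N i0) z with hc
  have hc0 : 0 ≤ c := Real.sqrt_nonneg _
  have hcsq : c ^ 2 = ∑ j ∈ N i0, z j ^ 2 :=
    Real.sq_sqrt (Finset.sum_nonneg fun _ _ => sq_nonneg _)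
  have hmem : M ∈ { t : ℝ | ∃ β : Fin p → ℝ,
      graphNorm p N τ β ≤ 1 ∧ t = ∑ i, z i * β i } := by
    rcases hc0.lt_or_eq with hcpos | hczero
    · -- c > 0 : explicit maximizer
      set d : ℝ := τ i0 * c with hd
      have hdpos : 0 < d := mul_pos (hτ i0) hcpos
      set β : Fin p → ℝ := fun j => if j ∈ N i0 then z j / d else 0 with hβdef
      refine ⟨β, ?_, ?_⟩
      · -- graphNorm β ≤ 1
        have hsumβ : ∑ j, β j ^ 2 = c ^ 2 / d ^ 2 := by
          rw [hcsq]
          rw [show ∑ j, β j ^ 2 = ∑ j, (if j ∈ N i0 then z j ^ 2 / d ^ 2 else 0) from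
            Finset.sum_congr rfl fun j _ => by by_cases h : j ∈ N i0 <;>
              simp [hβdef, h, div_pow]]
          rw [Finset.sum_ite_mem, Finset.univ_inter, Finset.sum_div]
        have hl2β : l2norm β = c / d := by
          rw [l2norm, hsumβ, ← div_pow, Real.sqrt_sq (div_nonneg hc0 hdpos.le)]
        have h1 : (1:ℝ) ∈ { s | ∃ V : Fin p → Fin p → ℝ,
            (∀ j, (∑ i, V i j) = β j) ∧ (∀ i, ∀ j, j ∉ N i → V i j = 0) ∧
            s = ∑ i, τ i * l2norm (V i) } := by
          refine ⟨fun i j => if i = i0 then β j else 0, ?_, ?_, ?_⟩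
          · intro j; simp
          · intro i j hj
            dsimp only
            by_cases h : i = i0
            · rw [if_pos h, hβdef]
              have hj' : j ∉ N i0 := h ▸ hj
              exact if_neg hj'
            · exact if_neg h
          · rw [Finset.sum_eq_single i0]
            · have hV : (fun j => if i0 = i0 then β j else 0) = β := by
                funext j; rw [if_pos rfl]
              have hcne : c ≠ 0 := hcpos.ne'
              have hτne : τ i0 ≠ 0 := (hτ i0).ne'
              dsimp only
              rw [hV, hl2β, hd]
              field_simp
            · intro i _ hi
              simp [hi, l2norm_zero_fun]
            · intro h; exact absurd (Finset.mem_univ i0) h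
        exact (csInf_le (hbb β) h1)
      · -- value equals M
        rw [hMdef, hi0]
        have h2 : ∑ i, z i * β i = c ^ 2 / d := by
          rw [hcsq]
          rw [show ∑ i, z i * β i = ∑ j, (if j ∈ N i0 then z j ^ 2 / d else 0) from
            Finset.sum_congr rfl fun j _ => by by_cases h : j ∈ N i0 <;>
              simp [hβdef, h] <;> ring]
          rw [Finset.sum_ite_mem, Finset.univ_inter, Finset.sum_div]
        rw [h2, hd]
        have hcne : c ≠ 0 := hcpos.ne'
        have hτne : τ i0 ≠ 0 := (hτ i0).ne'
        rw [sq]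
        field_simp
    · -- c = 0 : take β = 0
      refine ⟨fun _ => 0, ?_, ?_⟩
      · have h0 : (0:ℝ) ∈ { s | ∃ V : Fin p → Fin p → ℝ,
            (∀ j, (∑ i, V i j) = (0:ℝ)) ∧ (∀ i, ∀ j, j ∉ N i → V i j = 0) ∧
              s = ∑ i, τ i * l2norm (V i) } := by
          refine ⟨fun _ _ => 0, fun j => by simp, fun i j _ => rfl, ?_⟩
          simp [l2norm_zero_fun]
        exact (csInf_le (hbb _) h0).trans zero_le_one
      · rw [hMdef, hi0, ← hczero]
        simp
  exact le_antisymm (csSup_le ⟨M, hmem⟩ hub) (le_csSup ⟨M, hub⟩ hmem)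
end
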